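/- arXiv:hep-th/9407191 — 2 statements merged into one kernel-verified Lean document; each statement's English description precedes it below -/
import Mathlib

section
/- As formal power series, ∏_{n≥1, n even} (1+q^n) = ∑_{r≥0} q^{r²+r}/(q²;q²)_r, where (q²;q²)_r = ∏_{j=1}^r (1-q^{2j}). -/
/-!
The finite form `∏_{j<N} (1 + q^{a(j+1)}) = ∑_{r ≤ N} q^{a·C(r+1,2)} [N, r]_{q^a}` follows by
induction on `N` from the `q`-Pascal rule `[N+1, r+1] = [N, r+1] + q^{a(N-r)} [N, r]`. Modulo
`q^{a(N-r+1)}` the Gaussian binomial `[N, r]_{q^a}` agrees with `1 / (q^a; q^a)_r`, and modulo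
`q^{a(N+1)}` the factors of the product with index `j ≥ N` are `1`; so for `a = 2` and `N = d`
both sides of the identity have the same coefficient of `q^d` as the finite form.
-/

open PowerSeries Finset

/-- `∏_{j=1}^m (1 - q^{a j})`, the q-Pochhammer `(q^a; q^a)_m` as a power series in `q = X`. -/
noncomputable def qpochA (a m : ℕ) : PowerSeries ℚ :=
  ∏ j ∈ Finset.range m, (1 - (PowerSeries.X : PowerSeries ℚ) ^ (a * (j + 1)))

/-- `(q)_m = ∏_{j=1}^m (1 - q^j)`. -/
noncomputable def qpoch (m : ℕ) : PowerSeries ℚ := qpochA 1 m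

/-- Gaussian binomial `[N choose M]_{q^a}`: `(q^a)_N / ((q^a)_M (q^a)_{N-M})` when
`0 ≤ M ≤ N`, and `0` otherwise. -/
noncomputable def qbinomA (a : ℕ) (N M : ℤ) : PowerSeries ℚ :=
  if 0 ≤ M ∧ M ≤ N then
    qpochA a N.toNat * (qpochA a M.toNat)⁻¹ * (qpochA a (N - M).toNat)⁻¹
  else 0

/-- Gaussian binomial `[N choose M]_q`. -/
noncomputable def qbinom (N M : ℤ) : PowerSeries ℚ := qbinomA 1 N M

theorem dvd_prod_sub_one {R ι : Type*} [CommRing R] {x : R} {s : Finset ι} {g : ι → R}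
    (h : ∀ j ∈ s, x ∣ g j - 1) : x ∣ ∏ j ∈ s, g j - 1 :=
  Finset.prod_induction g (fun y => x ∣ y - 1)
    (fun y z hy hz => by
      rw [show y * z - 1 = (y - 1) * z + (z - 1) by ring]
      exact dvd_add (hy.mul_right z) hz)
    (by simp) h

theorem PowerSeries.coeff_eq_of_X_pow_dvd_sub {R : Type*} [CommRing R] {d : ℕ} {f g : R⟦X⟧}
    (h : X ^ (d + 1) ∣ f - g) : coeff d f = coeff d g := by
  rw [← sub_eq_zero, ← map_sub]
  exact X_pow_dvd_iff.mp h d d.lt_succ_self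

theorem qpochA_zero (a : ℕ) : qpochA a 0 = 1 := by simp [qpochA]

theorem qpochA_succ (a m : ℕ) : qpochA a (m + 1) = qpochA a m * (1 - X ^ (a * (m + 1))) :=
  prod_range_succ _ m

section qPochhammer

variable {a : ℕ}

theorem constantCoeff_qpochA (ha : 0 < a) (m : ℕ) : constantCoeff (qpochA a m) = 1 := by
  simp [qpochA, map_prod, ha.ne']

theorem inv_qpochA_mul_qpochA (ha : 0 < a) (m : ℕ) : (qpochA a m)⁻¹ * qpochA a m = 1 :=
  PowerSeries.inv_mul_cancel _ (by simp [constantCoeff_qpochA ha])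

theorem isUnit_qpochA (ha : 0 < a) (m : ℕ) : IsUnit (qpochA a m) :=
  IsUnit.of_mul_eq_one_right _ (inv_qpochA_mul_qpochA ha m)

theorem qbinomA_natCast (a N r : ℕ) :
    qbinomA a N r =
      if r ≤ N then qpochA a N * (qpochA a r)⁻¹ * (qpochA a (N - r))⁻¹ else 0 := by
  simp only [qbinomA, Nat.cast_nonneg, Nat.cast_le, true_and, Int.toNat_natCast]
  split_ifs with h
  · rw [← Nat.cast_sub h, Int.toNat_natCast]
  · rfl

theorem qbinomA_of_lt {N r : ℕ} (h : N < r) : qbinomA a N r = 0 := by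
  rw [qbinomA_natCast, if_neg h.not_ge]

theorem qpochA_mul_qpochA_mul_qbinomA (ha : 0 < a) {N r : ℕ} (h : r ≤ N) :
    qpochA a r * qpochA a (N - r) * qbinomA a N r = qpochA a N := by
  rw [qbinomA_natCast, if_pos h]
  linear_combination (qpochA a N * (qpochA a (N - r))⁻¹ * qpochA a (N - r)) *
    inv_qpochA_mul_qpochA ha r + qpochA a N * inv_qpochA_mul_qpochA ha (N - r)

theorem qbinomA_eq_of_mul (ha : 0 < a) {N r : ℕ} (h : r ≤ N) {f : ℚ⟦X⟧}
    (hf : qpochA a r * qpochA a (N - r) * f = qpochA a N) : qbinomA a N r = f :=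
  ((isUnit_qpochA ha r).mul (isUnit_qpochA ha (N - r))).mul_left_cancel
    ((qpochA_mul_qpochA_mul_qbinomA ha h).trans hf.symm)

theorem qbinomA_zero_right (ha : 0 < a) (N : ℕ) : qbinomA a N 0 = 1 :=
  mod_cast qbinomA_eq_of_mul ha N.zero_le (by simp [qpochA_zero])

theorem qbinomA_self (ha : 0 < a) (N : ℕ) : qbinomA a N N = 1 :=
  qbinomA_eq_of_mul ha le_rfl (by simp [qpochA_zero])

theorem qbinomA_succ_succ (ha : 0 < a) {N r : ℕ} (h : r ≤ N) :
    qbinomA a ↑(N + 1) ↑(r + 1) =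
      qbinomA a N ↑(r + 1) + X ^ (a * (N - r)) * qbinomA a N r := by
  rcases h.eq_or_lt with rfl | hlt
  · rw [qbinomA_self ha, qbinomA_self ha, qbinomA_of_lt (Nat.lt_succ_self r), Nat.sub_self]
    simp
  refine qbinomA_eq_of_mul ha (by omega) ?_
  obtain ⟨k, rfl⟩ : ∃ k, N = r + 1 + k := ⟨N - (r + 1), by omega⟩
  have h₁ := qpochA_mul_qpochA_mul_qbinomA ha (N := r + 1 + k) (r := r + 1) (by omega)
  have h₂ := qpochA_mul_qpochA_mul_qbinomA ha (N := r + 1 + k) (r := r) (by omega)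
  have hX : (X : ℚ⟦X⟧) ^ (a * (k + 1)) * X ^ (a * (r + 1)) = X ^ (a * (r + 1 + k + 1)) := by
    rw [← pow_add]; ring_nf
  rw [show r + 1 + k - (r + 1) = k by omega, qpochA_succ a r] at h₁
  rw [show r + 1 + k - r = k + 1 by omega, qpochA_succ a k] at h₂
  rw [show r + 1 + k + 1 - (r + 1) = k + 1 by omega, show r + 1 + k - r = k + 1 by omega,
    qpochA_succ a (r + 1 + k), qpochA_succ a k, qpochA_succ a r]
  linear_combination (1 - X ^ (a * (k + 1))) * h₁ +
    X ^ (a * (k + 1)) * (1 - X ^ (a * (r + 1))) * h₂ - qpochA a (r + 1 + k) * hX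

theorem prod_one_add_X_pow_eq_sum_qbinomA (ha : 0 < a) (N : ℕ) :
    ∏ j ∈ range N, (1 + X ^ (a * (j + 1)) : ℚ⟦X⟧) =
      ∑ r ∈ range (N + 1), X ^ (a * (r + 1).choose 2) * qbinomA a N r := by
  induction N with
  | zero => simpa using (qbinomA_zero_right ha 0).symm
  | succ N ih =>
    have hpascal : ∀ r ∈ range (N + 1),
        X ^ (a * (r + 2).choose 2) * qbinomA a ↑(N + 1) ↑(r + 1) =
          X ^ (a * (r + 2).choose 2) * qbinomA a N ↑(r + 1) +
            X ^ (a * (N + 1)) * (X ^ (a * (r + 1).choose 2) * qbinomA a N r) := by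
      intro r hr
      have hexp : a * (r + 2).choose 2 + a * (N - r) = a * (N + 1) + a * (r + 1).choose 2 := by
        rw [Nat.choose_succ_succ, Nat.choose_one_right]
        have := mem_range.mp hr
        nlinarith [Nat.sub_add_cancel (Nat.le_of_lt_succ this)]
      rw [qbinomA_succ_succ ha (Nat.le_of_lt_succ (mem_range.mp hr)), mul_add, ← mul_assoc,
        ← mul_assoc, ← pow_add, ← pow_add, hexp]
    have hshift := sum_range_succ' (fun r => X ^ (a * (r + 1).choose 2) * qbinomA a N r) (N + 1)
    rw [sum_range_succ, qbinomA_of_lt N.lt_succ_self, mul_zero, add_zero, ← ih] at hshift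
    rw [prod_range_succ,
      sum_range_succ' (fun r => X ^ (a * (r + 1).choose 2) * qbinomA a ↑(N + 1) ↑r),
      sum_congr rfl hpascal, sum_add_distrib, ← mul_sum, ← ih]
    simp only [Nat.cast_zero, qbinomA_zero_right ha, zero_add] at hshift ⊢
    linear_combination hshift

theorem X_pow_dvd_qbinomA_sub_inv_qpochA (ha : 0 < a) {N r : ℕ} (h : r ≤ N) :
    X ^ (a * (N - r + 1)) ∣ qbinomA a N r - (qpochA a r)⁻¹ := by
  set D : ℚ⟦X⟧ := ∏ j ∈ range r, (1 - X ^ (a * (N - r + j + 1)))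
  have hsplit : qpochA a N = qpochA a (N - r) * D := by
    rw [qpochA, ← Nat.sub_add_cancel h, prod_range_add, Nat.sub_add_cancel h]
    rfl
  have hq : qbinomA a N r = (qpochA a r)⁻¹ * D := qbinomA_eq_of_mul ha h <| by
    rw [hsplit]
    linear_combination qpochA a (N - r) * D * inv_qpochA_mul_qpochA ha r
  have hD : X ^ (a * (N - r + 1)) ∣ D - 1 := dvd_prod_sub_one fun j _ => by
    rw [sub_sub_cancel_left, dvd_neg]
    exact pow_dvd_pow _ (Nat.mul_le_mul_left a (by omega))
  rw [hq, ← mul_sub_one]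
  exact hD.mul_left _

theorem coeff_X_pow_mul_qbinomA_eq_coeff_X_pow_mul_inv_qpochA (ha : 0 < a) {d r : ℕ}
    (h : r ≤ d) :
    coeff d (X ^ (a * (r + 1).choose 2) * qbinomA a d r) =
      coeff d (X ^ (a * (r + 1).choose 2) * (qpochA a r)⁻¹) := by
  have hdeg : d + 1 ≤ a * (r + 1).choose 2 + a * (d - r + 1) := by
    have hr : r ≤ (r + 1).choose 2 := by
      rw [Nat.choose_succ_succ, Nat.choose_one_right]
      exact Nat.le_add_right r _
    rw [← mul_add]
    exact (by omega : d + 1 ≤ (r + 1).choose 2 + (d - r + 1)).trans (Nat.le_mul_of_pos_left _ ha)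
  refine coeff_eq_of_X_pow_dvd_sub ((pow_dvd_pow X hdeg).trans ?_)
  rw [pow_add, ← mul_sub]
  exact mul_dvd_mul_left _ (X_pow_dvd_qbinomA_sub_inv_qpochA ha h)

end qPochhammer

theorem PowerSeries.X_pow_dvd_prod_range_one_add_X_pow_sub {R : Type*} [CommRing R] (a : ℕ)
    {N M : ℕ} (h : N ≤ M) :
    X ^ (a * (N + 1)) ∣
      ∏ j ∈ range M, (1 + X ^ (a * (j + 1)) : R⟦X⟧) -
        ∏ j ∈ range N, (1 + X ^ (a * (j + 1))) := by
  rw [← prod_range_mul_prod_Ico _ h, ← mul_sub_one]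
  refine (dvd_prod_sub_one fun j hj => ?_).mul_left _
  rw [add_sub_cancel_left]
  exact pow_dvd_pow _ (Nat.mul_le_mul_left a (by simp at hj; omega))

theorem filter_pos_even_range_eq_image (d : ℕ) :
    (range (d + 1)).filter (fun n => 0 < n ∧ Even n) =
      (range (d / 2)).image (fun j => 2 * (j + 1)) := by
  ext n
  simp only [mem_filter, mem_range, mem_image, Nat.even_iff]
  constructor
  · rintro ⟨hn, hpos, heven⟩
    exact ⟨n / 2 - 1, by omega, by omega⟩
  · rintro ⟨j, hj, rfl⟩
    omega

/-- Euler's identity (j = 1 case), coefficientwise: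
`∏_{n ≥ 1 even} (1+q^n) = ∑_{r≥0} q^{r²+r}/(q²;q²)_r`.
Factors with `n > d` and terms with `r > d` do not affect the coefficient of `q^d`. -/
theorem euler_even (d : ℕ) :
    (PowerSeries.coeff (R := ℚ) d)
        (∏ n ∈ (Finset.range (d + 1)).filter (fun n => 0 < n ∧ Even n),
          (1 + (PowerSeries.X : PowerSeries ℚ) ^ n)) =
      (PowerSeries.coeff (R := ℚ) d)
        (∑ r ∈ Finset.range (d + 1),
          (PowerSeries.X : PowerSeries ℚ) ^ (r ^ 2 + r) * (qpochA 2 r)⁻¹) := by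
  rw [filter_pos_even_range_eq_image, prod_image (fun _ _ _ _ h => by omega),
    ← coeff_eq_of_X_pow_dvd_sub ((pow_dvd_pow X (by omega)).trans
      (X_pow_dvd_prod_range_one_add_X_pow_sub 2 (Nat.div_le_self d 2))),
    prod_one_add_X_pow_eq_sum_qbinomA two_pos, map_sum, map_sum]
  refine sum_congr rfl fun r hr => ?_
  have hexp : 2 * (r + 1).choose 2 = r ^ 2 + r := by
    rw [Nat.choose_two_right, mul_comm, Nat.div_two_mul_two_of_even (Nat.even_mul_pred_self _),
      Nat.add_sub_cancel]
    ring
  rw [← hexp]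
  exact coeff_X_pow_mul_qbinomA_eq_coeff_X_pow_mul_inv_qpochA two_pos
    (Nat.le_of_lt_succ (mem_range.mp hr))
end

section
/- Fix nonnegative integers n, n₁, N with n₁ ≤ n. The number of partitions of N of the form N = n₁(n₁+1) + 2(b₁ + ⋯ + b_{n₁}) with n−n₁ ≥ b₁ ≥ ⋯ ≥ b_{n₁} ≥ 0 equals the number of partitions of N with largest part at most n+1, at most n parts, exactly n₁ diagonal hooks, and all successive ranks equal to 1. -/
/-- Length of the `l`-th column (1-indexed) of the Ferrers diagram:
the number of parts that are `≥ l`. -/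
def colLen {N : ℕ} (p : Nat.Partition N) (l : ℕ) : ℕ :=
  (p.parts.filter (fun x => l ≤ x)).card

/-- Length of the `l`-th row (1-indexed) of the Ferrers diagram, i.e. the `l`-th
largest part: the number of columns of length `≥ l`. -/
def rowLen {N : ℕ} (p : Nat.Partition N) (l : ℕ) : ℕ :=
  ((Finset.range (N + 1)).filter (fun m => l ≤ colLen p (m + 1))).card

/-- The number of diagonal hooks (right angles) = size of the Durfee square. -/
def durfee {N : ℕ} (p : Nat.Partition N) : ℕ :=
  ((Finset.range (N + 1)).filter (fun l => l + 1 ≤ rowLen p (l + 1))).card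

/-- The `l`-th successive rank (1-indexed): length of the `l`-th row minus length
of the `l`-th column. -/
def srank {N : ℕ} (p : Nat.Partition N) (l : ℕ) : ℤ :=
  (rowLen p l : ℤ) - (colLen p l : ℤ)

/-! A partition whose Durfee square has side `d` and whose first `d` successive ranks all
equal `1` is determined by the lengths `d + b i` of its first `d` columns: its first `d` rows
then have lengths `d + 1 + b i`, and the rows below the Durfee square form the conjugate of the
antitone sequence `b`. Such a partition has size `d (d + 1) + 2 ∑ b i`, `d + max b` parts and
largest part `d + 1 + max b`, so `b ↦ (b + 1 | b)` (Frobenius notation) is the bijection.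
Partitions are compared through their column lengths, which determine them. -/

open Finset

lemma lt_card_filter_range_iff {P : ℕ → Prop} [DecidablePred P] (hP : Antitone P) {K m : ℕ}
    (hm : m < K) : m < #{i ∈ range K | P i} ↔ P m := by
  constructor
  · intro hcard
    by_contra hPm
    have hsub : {i ∈ range K | P i} ⊆ range m := fun i hi => by
      simp only [mem_filter, mem_range] at hi ⊢
      by_contra! hmi
      exact hPm (hP hmi hi.2)
    simpa using hcard.trans_le (card_le_card hsub)
  · intro hPm
    have hsub : range (m + 1) ⊆ {i ∈ range K | P i} := fun i hi => by
      simp only [mem_filter, mem_range] at hi ⊢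
      exact ⟨by omega, hP (by omega) hPm⟩
    simpa using card_le_card hsub

lemma Fin.lt_card_filter_iff {k : ℕ} {P : Fin k → Prop} [DecidablePred P] (hP : Antitone P)
    (i : Fin k) : (i : ℕ) < #{j | P j} ↔ P i := by
  constructor
  · intro hcard
    by_contra hPi
    have hsub : ({j | P j} : Finset (Fin k)) ⊆ Iio i := fun j hj => by
      simp only [mem_filter, mem_univ, true_and, mem_Iio] at hj ⊢
      by_contra! hij
      exact hPi (hP hij hj)
    simpa using hcard.trans_le (card_le_card hsub)
  · intro hPi
    have hsub : Iic i ⊆ ({j | P j} : Finset (Fin k)) := fun j hj => by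
      simp only [mem_filter, mem_univ, true_and, mem_Iic] at hj ⊢
      exact hP hj hPi
    simpa using card_le_card hsub

lemma Multiset.count_add_card_filter_succ_le (u : Multiset ℕ) (x : ℕ) :
    u.count x + (u.filter (x + 1 ≤ ·)).card = (u.filter (x ≤ ·)).card := by
  rw [Multiset.count_eq_card_filter_eq, ← Multiset.card_add, Multiset.filter_add_filter,
    (Multiset.filter_eq_nil (p := fun a => x = a ∧ x + 1 ≤ a)).mpr (by omega), add_zero]
  exact congrArg _ (Multiset.filter_congr (by omega))

lemma Multiset.eq_of_card_filter_le_eq {s t : Multiset ℕ} (hs : ∀ x ∈ s, 0 < x)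
    (ht : ∀ x ∈ t, 0 < x)
    (h : ∀ m, 1 ≤ m → (s.filter (m ≤ ·)).card = (t.filter (m ≤ ·)).card) : s = t := by
  ext x
  rcases Nat.eq_zero_or_pos x with rfl | hx
  · rw [Multiset.count_eq_zero_of_notMem (fun h0 => (hs 0 h0).false),
      Multiset.count_eq_zero_of_notMem (fun h0 => (ht 0 h0).false)]
  · have := s.count_add_card_filter_succ_le x
    have := t.count_add_card_filter_succ_le x
    have := h x hx
    have := h (x + 1) (by omega)
    omega

section Ferrers

variable {N : ℕ} (p : Nat.Partition N)

lemma colLen_antitone : Antitone (colLen p) := fun _ _ hab =>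
  Multiset.card_le_card (Multiset.monotone_filter_right _ fun _ => hab.trans)

lemma colLen_le_card (m : ℕ) : colLen p m ≤ Multiset.card p.parts :=
  Multiset.card_le_card (Multiset.filter_le _ _)

lemma colLen_eq_zero_of_lt {m : ℕ} (hm : N < m) : colLen p m = 0 := by
  refine Multiset.card_eq_zero.mpr (Multiset.filter_eq_nil.mpr fun x hx hmx => ?_)
  have : x ≤ N := p.parts_sum ▸ Multiset.le_sum_of_mem hx
  omega

lemma lt_rowLen_iff {l : ℕ} (hl : 1 ≤ l) (m : ℕ) : m < rowLen p l ↔ l ≤ colLen p (m + 1) := by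
  rcases lt_or_ge m (N + 1) with hm | hm
  · exact lt_card_filter_range_iff (fun _ _ hij h => h.trans (colLen_antitone p (by omega))) hm
  · rw [colLen_eq_zero_of_lt p (by omega)]
    have : rowLen p l ≤ N + 1 := (card_filter_le _ _).trans (card_range _).le
    omega

lemma lt_durfee_iff (l : ℕ) : l < durfee p ↔ l + 1 ≤ colLen p (l + 1) := by
  have hdurfee : durfee p = #{l ∈ range (N + 1) | l + 1 ≤ colLen p (l + 1)} :=
    congrArg card (filter_congr fun l _ => Nat.succ_le_iff.trans (lt_rowLen_iff p l.succ_pos l))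
  rcases lt_or_ge l (N + 1) with hl | hl
  · rw [hdurfee]
    exact lt_card_filter_range_iff
      (fun i j hij h => by have := colLen_antitone p (show i + 1 ≤ j + 1 by omega); omega) hl
  · rw [colLen_eq_zero_of_lt p (by omega)]
    have : durfee p ≤ N + 1 := (card_filter_le _ _).trans (card_range _).le
    omega

lemma durfee_le_colLen {m : ℕ} (hm : m ≤ durfee p) : durfee p ≤ colLen p m := by
  rcases Nat.eq_zero_or_pos (durfee p) with h0 | hpos
  · omega
  · have := (lt_durfee_iff p (durfee p - 1)).mp (by omega)
    have := colLen_antitone p (show m ≤ durfee p - 1 + 1 by omega)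
    omega

lemma colLen_le_durfee {m : ℕ} (hm : durfee p < m) : colLen p m ≤ durfee p := by
  have := (lt_durfee_iff p (durfee p)).not.mp (lt_irrefl _)
  have := colLen_antitone p (show durfee p + 1 ≤ m by omega)
  omega

end Ferrers

section Frobenius

variable {d : ℕ} (b : Fin d → ℕ)

/-- The parts of the partition with Frobenius symbol `(b + 1 | b)`: `d` rows of length
`d + 1 + b i`, followed by the rows of the conjugate of `b` below the Durfee square. -/
def frobeniusParts (d : ℕ) (b : Fin d → ℕ) : Multiset ℕ :=
  univ.val.map (fun i => d + 1 + b i) + (range (univ.sup b)).val.map fun j => #{i | j < b i}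

lemma pos_of_mem_frobeniusParts {x : ℕ} (hx : x ∈ frobeniusParts d b) : 0 < x := by
  rcases Multiset.mem_add.mp hx with hx | hx
  · obtain ⟨i, -, rfl⟩ := Multiset.mem_map.mp hx
    omega
  · obtain ⟨j, hj, rfl⟩ := Multiset.mem_map.mp hx
    obtain ⟨i, -, hi⟩ := Finset.lt_sup_iff.mp (mem_range.mp hj)
    exact card_pos.mpr ⟨i, by simpa using hi⟩

lemma le_of_mem_frobeniusParts {x : ℕ} (hx : x ∈ frobeniusParts d b) :
    x ≤ d + 1 + univ.sup b := by
  rcases Multiset.mem_add.mp hx with hx | hx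
  · obtain ⟨i, -, rfl⟩ := Multiset.mem_map.mp hx
    have := le_sup (f := b) (mem_univ i)
    omega
  · obtain ⟨j, -, rfl⟩ := Multiset.mem_map.mp hx
    have : #{i | j < b i} ≤ d := (card_le_univ _).trans_eq (Fintype.card_fin d)
    omega

lemma filter_range_sup_lt_eq_range (i : Fin d) :
    {j ∈ range (univ.sup b) | j < b i} = range (b i) := by
  have := le_sup (f := b) (mem_univ i)
  ext j
  simp only [mem_filter, mem_range]
  omega

lemma card_frobeniusParts : Multiset.card (frobeniusParts d b) = d + univ.sup b := by
  simp [frobeniusParts]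

lemma sum_frobeniusParts : (frobeniusParts d b).sum = d * (d + 1) + 2 * ∑ i, b i := by
  have hconj : ∑ j ∈ range (univ.sup b), #{i | j < b i} = ∑ i, b i := by
    simp only [card_filter]
    rw [sum_comm]
    refine sum_congr rfl fun i _ => ?_
    rw [← card_filter, filter_range_sup_lt_eq_range, card_range]
  rw [frobeniusParts, Multiset.sum_add, sum_map_val, sum_map_val, hconj, sum_add_distrib]
  simp only [sum_const, card_univ, Fintype.card_fin, smul_eq_mul]
  ring

lemma card_filter_frobeniusParts (m : ℕ) :
    ((frobeniusParts d b).filter (m ≤ ·)).card =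
      #{i | m ≤ d + 1 + b i} + #{j ∈ range (univ.sup b) | m ≤ #{i | j < b i}} := by
  rw [frobeniusParts, Multiset.filter_add, Multiset.card_add, Multiset.filter_map,
    Multiset.filter_map, Multiset.card_map, Multiset.card_map]
  rfl

lemma card_filter_frobeniusParts_of_le (hb : Antitone b) (i : Fin d) :
    ((frobeniusParts d b).filter ((i : ℕ) + 1 ≤ ·)).card = d + b i := by
  have hupper : ({l | (i : ℕ) + 1 ≤ d + 1 + b l} : Finset (Fin d)) = univ :=
    filter_true_of_mem fun l _ => by omega
  have hlower : {j ∈ range (univ.sup b) | (i : ℕ) + 1 ≤ #{l | j < b l}} =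
      {j ∈ range (univ.sup b) | j < b i} :=
    filter_congr fun j _ => Nat.succ_le_iff.trans
      (Fin.lt_card_filter_iff (fun _ _ hll' h => h.trans_le (hb hll')) i)
  rw [card_filter_frobeniusParts, hupper, hlower, filter_range_sup_lt_eq_range, card_univ,
    Fintype.card_fin, card_range]

lemma card_filter_frobeniusParts_of_lt {m : ℕ} (hm : d < m) :
    ((frobeniusParts d b).filter (m ≤ ·)).card = #{i | m ≤ d + 1 + b i} := by
  have hlower : {j ∈ range (univ.sup b) | m ≤ #{l | j < b l}} = ∅ :=
    filter_false_of_mem fun j _ h => by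
      have := (card_le_univ {l | j < b l}).trans_eq (Fintype.card_fin d)
      omega
  rw [card_filter_frobeniusParts, hlower, card_empty, add_zero]

end Frobenius

def frobeniusPartition {N d : ℕ} (b : Fin d → ℕ) (hN : N = d * (d + 1) + 2 * ∑ i, b i) :
    Nat.Partition N where
  parts := frobeniusParts d b
  parts_pos := pos_of_mem_frobeniusParts b
  parts_sum := by rw [sum_frobeniusParts, hN]

section FrobeniusPartition

variable {N d : ℕ} {b : Fin d → ℕ} (hN : N = d * (d + 1) + 2 * ∑ i, b i)

lemma colLen_frobeniusPartition_of_le (hb : Antitone b) (i : Fin d) :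
    colLen (frobeniusPartition b hN) (i + 1) = d + b i :=
  card_filter_frobeniusParts_of_le b hb i

lemma colLen_frobeniusPartition_of_lt {m : ℕ} (hm : d < m) :
    colLen (frobeniusPartition b hN) m = #{i | m ≤ d + 1 + b i} :=
  card_filter_frobeniusParts_of_lt b hm

lemma durfee_frobeniusPartition (hb : Antitone b) : durfee (frobeniusPartition b hN) = d := by
  refine eq_of_forall_lt_iff fun l => ?_
  rw [lt_durfee_iff]
  rcases lt_or_ge l d with hl | hl
  · rw [colLen_frobeniusPartition_of_le hN hb ⟨l, hl⟩]
    omega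
  · rw [colLen_frobeniusPartition_of_lt hN (by omega)]
    have := (card_le_univ {i | l + 1 ≤ d + 1 + b i}).trans_eq (Fintype.card_fin d)
    omega

lemma rowLen_frobeniusPartition (hb : Antitone b) (i : Fin d) :
    rowLen (frobeniusPartition b hN) (i + 1) = d + b i + 1 := by
  refine eq_of_forall_lt_iff fun m => ?_
  rw [lt_rowLen_iff _ (by omega)]
  rcases lt_or_ge m d with hm | hm
  · rw [colLen_frobeniusPartition_of_le hN hb ⟨m, hm⟩]
    omega
  · rw [colLen_frobeniusPartition_of_lt hN (by omega), Nat.succ_le_iff,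
      filter_congr (q := fun l => m - d ≤ b l) (fun l _ => by omega),
      Fin.lt_card_filter_iff (fun _ _ hll' h => h.trans (hb hll')) i]
    omega

lemma srank_frobeniusPartition (hb : Antitone b) (i : Fin d) :
    srank (frobeniusPartition b hN) (i + 1) = 1 := by
  rw [srank, rowLen_frobeniusPartition hN hb, colLen_frobeniusPartition_of_le hN hb]
  push_cast
  ring

end FrobeniusPartition

lemma frobeniusParts_colLen_sub_eq_parts {N d : ℕ} (p : Nat.Partition N) (hd : durfee p = d)
    (hrank : ∀ l, 1 ≤ l → l ≤ d → srank p l = 1) :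
    frobeniusParts d (fun i => colLen p (i + 1) - d) = p.parts := by
  subst hd
  have hrowLen : ∀ l, 1 ≤ l → l ≤ durfee p → rowLen p l = colLen p l + 1 := fun l h1 h2 => by
    have := hrank l h1 h2
    rw [srank] at this
    omega
  refine Multiset.eq_of_card_filter_le_eq (fun _ => pos_of_mem_frobeniusParts _)
    (fun _ => p.parts_pos) fun m hm => ?_
  rcases le_or_gt m (durfee p) with hmd | hmd
  · obtain ⟨i, rfl⟩ : ∃ i : Fin (durfee p), m = i + 1 :=
      ⟨⟨m - 1, by omega⟩, (Nat.sub_add_cancel hm).symm⟩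
    rw [card_filter_frobeniusParts_of_le _ (fun _ _ hij => Nat.sub_le_sub_right
      (colLen_antitone p (Nat.succ_le_succ hij)) _)]
    exact Nat.add_sub_of_le (durfee_le_colLen p hmd)
  · rw [card_filter_frobeniusParts_of_lt _ hmd]
    change _ = colLen p m
    rw [← min_eq_right (colLen_le_durfee p hmd), ← Fin.card_filter_val_lt]
    congr 1
    refine filter_congr fun i _ => ?_
    have hcol := durfee_le_colLen p (show (i : ℕ) + 1 ≤ durfee p from i.isLt)
    have hrow := hrowLen (i + 1) (by omega) i.isLt
    have hdual := lt_rowLen_iff p (show 1 ≤ (i : ℕ) + 1 by omega) (m - 1)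
    rw [Nat.sub_add_cancel hm] at hdual
    omega

def frobeniusPartitionEquiv (n d N : ℕ) (h : d ≤ n) :
    {b : Fin d → ℕ // Antitone b ∧ (∀ i, b i ≤ n - d) ∧ N = d * (d + 1) + 2 * ∑ i, b i} ≃
      {p : Nat.Partition N // (∀ x ∈ p.parts, x ≤ n + 1) ∧ Multiset.card p.parts ≤ n ∧
        durfee p = d ∧ ∀ l, 1 ≤ l → l ≤ d → srank p l = 1} where
  toFun b :=
    have hsup : univ.sup b.1 ≤ n - d := Finset.sup_le fun i _ => b.2.2.1 i
    ⟨frobeniusPartition b.1 b.2.2.2,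
      fun x hx => (le_of_mem_frobeniusParts b.1 hx).trans (by omega),
      (card_frobeniusParts b.1).trans_le (by omega),
      durfee_frobeniusPartition _ b.2.1,
      fun l h1 h2 => by
        obtain ⟨i, rfl⟩ : ∃ i : Fin d, l = i + 1 :=
          ⟨⟨l - 1, by omega⟩, (Nat.sub_add_cancel h1).symm⟩
        exact srank_frobeniusPartition _ b.2.1 i⟩
  invFun p :=
    ⟨fun i => colLen p.1 (i + 1) - d,
      fun _ _ hij => Nat.sub_le_sub_right (colLen_antitone p.1 (Nat.succ_le_succ hij)) _,
      fun i => Nat.sub_le_sub_right ((colLen_le_card _ _).trans p.2.2.1) _,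
      by rw [← sum_frobeniusParts, frobeniusParts_colLen_sub_eq_parts p.1 p.2.2.2.1 p.2.2.2.2,
        p.1.parts_sum]⟩
  left_inv b := Subtype.ext <| funext fun i => by
    simp only [colLen_frobeniusPartition_of_le _ b.2.1, Nat.add_sub_cancel_left]
  right_inv p := Subtype.ext <| Nat.Partition.ext <|
    frobeniusParts_colLen_sub_eq_parts p.1 p.2.2.2.1 p.2.2.2.2

/-- Case `k = 2, i = 1` of the second main bijection: partitions
`N = n₁(n₁+1) + 2(b₁ + ⋯ + b_{n₁})` with `n - n₁ ≥ b₁ ≥ ⋯ ≥ b_{n₁} ≥ 0` are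
equinumerous with partitions of `N` in an `(n+1) × n` box with exactly `n₁`
diagonal hooks and all successive ranks equal to `1`. -/
theorem bijection_Q31 (n n₁ N : ℕ) (h : n₁ ≤ n) :
    Nat.card {b : Fin n₁ → ℕ //
        Antitone b ∧ (∀ p, b p ≤ n - n₁) ∧ N = n₁ * (n₁ + 1) + 2 * ∑ p, b p} =
      Nat.card {p : Nat.Partition N //
        (∀ x ∈ p.parts, x ≤ n + 1) ∧ Multiset.card p.parts ≤ n ∧
        durfee p = n₁ ∧
        ∀ l, 1 ≤ l → l ≤ n₁ → srank p l = 1} :=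
  Nat.card_congr (frobeniusPartitionEquiv n n₁ N h)
end
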